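/- arXiv:1004.3625 — 5 statements merged into one kernel-verified Lean document; each statement's English description precedes it below -/
import Mathlib

section
/- Let b(x) = Σ_{k≥0} b_k x^k be a power series with nonnegative coefficients converging on [0,1). If there exists c > 0 such that b'(x)/b(x) ≤ c/(1-x) for all 0 ≤ x < 1, then there exists a positive constant K = K(c) such that Σ_{k=0}^N b_k ≥ K · b(e^{-1/N}) for all N ≥ 2c. -/
/-!
The hypothesis on the logarithmic derivative makes `B t * (1 - t) ^ c` nonincreasing on `[0, 1)`.
With `y = exp (-1 / N)` and `x = y ^ (m + 1)`, Bernoulli's inequality `1 - x ≤ (m + 1) (1 - y)`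
then gives `B y ≤ (m + 1) ^ c * B x`. On the other hand `x ^ k ≤ e ^ (-m) * y ^ k` for `k > N`,
so `B x ≤ ∑_{k ≤ N} b k + e ^ (-m) * B y`. Choosing `m` with `2 (m + 1) ^ c ≤ e ^ m` yields the
bound with `K = 1 / (2 (m + 1) ^ c)`.
-/

open Real Set Finset Filter

lemma antitoneOn_mul_one_sub_rpow {B B' : ℝ → ℝ} {c : ℝ}
    (hBpos : ∀ t ∈ Ico (0 : ℝ) 1, 0 < B t)
    (hB : ∀ t ∈ Ico (0 : ℝ) 1, HasDerivAt B (B' t) t)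
    (hlog : ∀ t ∈ Ico (0 : ℝ) 1, B' t / B t ≤ c / (1 - t)) :
    AntitoneOn (fun t => B t * (1 - t) ^ c) (Ico 0 1) := by
  have hderiv : ∀ t ∈ Ico (0 : ℝ) 1, HasDerivAt (fun t => B t * (1 - t) ^ c)
      (B' t * (1 - t) ^ c + B t * (-1 * c * (1 - t) ^ (c - 1))) t := fun t ht =>
    (hB t ht).mul (((hasDerivAt_id t).const_sub 1).rpow_const (Or.inl (sub_pos.2 ht.2).ne'))
  refine antitoneOn_of_hasDerivWithinAt_nonpos (convex_Ico 0 1)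
    (fun t ht => (hderiv t ht).continuousAt.continuousWithinAt)
    (fun t ht => (hderiv t (interior_subset ht)).hasDerivWithinAt) fun t ht => ?_
  have ht' := interior_subset ht
  have h1t : 0 < 1 - t := by linarith [ht'.2]
  have hB't : B' t * (1 - t) ≤ c * B t := by
    have := hlog t ht'
    rwa [div_le_div_iff₀ (hBpos t ht') h1t] at this
  have hpow : (1 - t) ^ c = (1 - t) ^ (c - 1) * (1 - t) := by
    rw [rpow_sub_one h1t.ne', div_mul_cancel₀ _ h1t.ne']
  have := mul_le_mul_of_nonneg_left hB't (rpow_nonneg h1t.le (c - 1))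
  rw [hpow]
  linarith

lemma one_sub_pow_le_mul_one_sub {y : ℝ} (hy : -1 ≤ y) (n : ℕ) :
    1 - y ^ n ≤ n * (1 - y) := by
  have := one_add_mul_le_pow (a := y - 1) (by linarith) n
  simp only [add_sub_cancel] at this
  linarith

lemma le_rpow_mul_of_antitoneOn {B : ℝ → ℝ} {c : ℝ} (hc : 0 ≤ c)
    (hG : AntitoneOn (fun t => B t * (1 - t) ^ c) (Ico 0 1))
    {y : ℝ} (hy0 : 0 ≤ y) (hy1 : y < 1) {n : ℕ} (hn : n ≠ 0) (hBn : 0 ≤ B (y ^ n)) :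
    B y ≤ (n : ℝ) ^ c * B (y ^ n) := by
  have h1y : 0 < 1 - y := by linarith
  have hyn : y ^ n ≤ y := pow_le_of_le_one hy0 hy1.le hn
  have hyn1 : y ^ n < 1 := pow_lt_one₀ hy0 hy1 hn
  have key : B y * (1 - y) ^ c ≤ (n ^ c * B (y ^ n)) * (1 - y) ^ c :=
    calc B y * (1 - y) ^ c ≤ B (y ^ n) * (1 - y ^ n) ^ c :=
          hG ⟨pow_nonneg hy0 n, hyn1⟩ ⟨hy0, hy1⟩ hyn
      _ ≤ B (y ^ n) * (n * (1 - y)) ^ c := by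
          gcongr
          exact one_sub_pow_le_mul_one_sub (by linarith) n
      _ = (n ^ c * B (y ^ n)) * (1 - y) ^ c := by
          rw [mul_rpow (Nat.cast_nonneg n) h1y.le]; ring
  exact le_of_mul_le_mul_right key (rpow_pos_of_pos h1y c)

lemma hasSum_le_sum_range_add_mul {b : ℕ → ℝ} (hb : ∀ k, 0 ≤ b k) {x y r Bx By : ℝ} {N : ℕ}
    (hx0 : 0 ≤ x) (hx1 : x ≤ 1) (hy : 0 ≤ y) (hr : 0 ≤ r)
    (htail : ∀ k, N < k → x ^ k ≤ r * y ^ k)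
    (hBx : HasSum (fun k => b k * x ^ k) Bx) (hBy : HasSum (fun k => b k * y ^ k) By) :
    Bx ≤ ∑ k ∈ range (N + 1), b k + r * By := by
  have hhead : HasSum (fun k => if k ∈ range (N + 1) then b k else 0)
      (∑ k ∈ range (N + 1), b k) := by
    simpa only [sum_ite_mem, Finset.inter_self] using
      hasSum_sum_of_ne_finset_zero (L := SummationFilter.unconditional ℕ) (s := range (N + 1))
        (f := fun k => if k ∈ range (N + 1) then b k else 0) fun k hk => if_neg hk
  refine hasSum_le (fun k => ?_) hBx (hhead.add (hBy.mul_left r))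
  have hry : 0 ≤ r * (b k * y ^ k) := mul_nonneg hr (mul_nonneg (hb k) (pow_nonneg hy k))
  split_ifs with hk
  · have : b k * x ^ k ≤ b k := mul_le_of_le_one_right (hb k) (pow_le_one₀ hx0 hx1)
    linarith
  · have hNk : N < k := by simpa using hk
    calc b k * x ^ k ≤ b k * (r * y ^ k) := mul_le_mul_of_nonneg_left (htail k hNk) (hb k)
      _ = 0 + r * (b k * y ^ k) := by ring

lemma exists_two_mul_rpow_le_exp (c : ℝ) : ∃ m : ℕ, 2 * ((m : ℝ) + 1) ^ c ≤ exp m := by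
  have hlim : Tendsto (fun m : ℕ => exp ((m : ℝ) + 1) / ((m : ℝ) + 1) ^ c) atTop atTop :=
    (tendsto_exp_div_rpow_atTop c).comp
      (tendsto_atTop_add_const_right _ 1 tendsto_natCast_atTop_atTop)
  obtain ⟨m, hm⟩ := (hlim.eventually_ge_atTop (2 * exp 1)).exists
  refine ⟨m, ?_⟩
  have hpos : 0 < ((m : ℝ) + 1) ^ c := by positivity
  rw [le_div_iff₀ hpos, exp_add, mul_comm (exp _), mul_assoc] at hm
  exact le_of_mul_le_mul_left (by linarith) (exp_pos 1)

lemma exp_neg_inv_pow_mul {N : ℕ} (hN : N ≠ 0) (m : ℕ) :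
    exp (-1 / N) ^ (m * N) = exp (-m) := by
  rw [← exp_nat_mul]
  congr 1
  push_cast
  field_simp

lemma pow_succ_pow_le_exp_neg_mul {N k : ℕ} (hN : N ≠ 0) (hk : N < k) (m : ℕ) :
    (exp (-1 / N) ^ (m + 1)) ^ k ≤ exp (-m) * exp (-1 / N) ^ k := by
  have hy0 : 0 ≤ exp (-1 / N) := (exp_pos _).le
  have hy1 : exp (-1 / N) ≤ 1 :=
    exp_le_one_iff.2 (div_nonpos_of_nonpos_of_nonneg (by norm_num) N.cast_nonneg)
  rw [← exp_neg_inv_pow_mul hN, ← pow_mul, add_mul, one_mul, pow_add]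
  exact mul_le_mul_of_nonneg_right
    (pow_le_pow_of_le_one hy0 hy1 (Nat.mul_le_mul_left m hk.le)) (pow_nonneg hy0 _)

/-- Tauberian-type lower bound for partial sums of a power series with
nonnegative coefficients whose logarithmic derivative is bounded by `c / (1 - x)`. -/
theorem stmt_0 (c : ℝ) (hc : 0 < c) :
    ∃ K : ℝ, 0 < K ∧
      ∀ (b : ℕ → ℝ) (B B' : ℝ → ℝ),
        (∀ k, 0 ≤ b k) →
        (∀ x : ℝ, 0 ≤ x → x < 1 → HasSum (fun k => b k * x ^ k) (B x)) →
        (∀ x : ℝ, 0 ≤ x → x < 1 → 0 < B x) →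
        (∀ x : ℝ, 0 ≤ x → x < 1 → HasDerivAt B (B' x) x) →
        (∀ x : ℝ, 0 ≤ x → x < 1 → B' x / B x ≤ c / (1 - x)) →
        ∀ N : ℕ, 2 * c ≤ (N : ℝ) →
          K * B (Real.exp (-1 / (N : ℝ))) ≤ ∑ k ∈ Finset.range (N + 1), b k := by
  obtain ⟨m, hm⟩ := exists_two_mul_rpow_le_exp c
  set M : ℝ := ((m : ℝ) + 1) ^ c
  have hM : 0 < M := by positivity
  refine ⟨(2 * M)⁻¹, by positivity, fun b B B' hb hB hBpos hBd hlog N hN => ?_⟩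
  have hN0 : N ≠ 0 := by rintro rfl; rw [Nat.cast_zero] at hN; linarith
  set y := exp (-1 / N)
  have hy0 : 0 ≤ y := (exp_pos _).le
  have hy1 : y < 1 := exp_lt_one_iff.2 (div_neg_of_neg_of_pos (by norm_num) (by positivity))
  have hx1 : y ^ (m + 1) < 1 := pow_lt_one₀ hy0 hy1 (Nat.succ_ne_zero m)
  have hcompare : B y ≤ M * B (y ^ (m + 1)) := by
    have hG := antitoneOn_mul_one_sub_rpow (fun t ht => hBpos t ht.1 ht.2)
      (fun t ht => hBd t ht.1 ht.2) (fun t ht => hlog t ht.1 ht.2)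
    have := le_rpow_mul_of_antitoneOn hc.le hG hy0 hy1 (Nat.succ_ne_zero m)
      (hBpos _ (pow_nonneg hy0 _) hx1).le
    rwa [Nat.cast_succ] at this
  have htail : B (y ^ (m + 1)) ≤ ∑ k ∈ range (N + 1), b k + exp (-m) * B y :=
    hasSum_le_sum_range_add_mul hb (pow_nonneg hy0 _) hx1.le hy0 (exp_pos _).le
      (fun k hk => pow_succ_pow_le_exp_neg_mul hN0 hk m) (hB _ (pow_nonneg hy0 _) hx1)
      (hB y hy0 hy1)
  have hexp : exp (-m) * B y ≤ (2 * M)⁻¹ * B y := by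
    refine mul_le_mul_of_nonneg_right ?_ (hBpos y hy0 hy1).le
    rw [exp_neg]
    exact inv_anti₀ (by positivity) hm
  have hBx : M⁻¹ * B y ≤ B (y ^ (m + 1)) := (inv_mul_le_iff₀ hM).2 hcompare
  have hsplit : (2 * M)⁻¹ * B y = M⁻¹ * B y - (2 * M)⁻¹ * B y := by ring
  linarith
end

section
/- Let p(z) = exp(Σ_{k≥1} (d_k/k) z^k) = Σ_{n≥0} p_n z^n where 0 < d⁻ ≤ d_k ≤ d⁺. Then the coefficients satisfy the recurrence n·p_n = Σ_{k=1}^n d_k p_{n-k} for all n ≥ 1, and consequently p_n ≤ d⁺·e·p(e^{-1/n})/n for n ≥ 1. -/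
/-!
Write `P(x) = ∑ pₙ xⁿ = exp S(x)` with `S(x) = ∑ d_k x^k / k`. Differentiating termwise
on `(0, 1)` gives `P' = S' P`; the left side has coefficients `(n + 1) p_{n+1}` and the right
side is the Cauchy product with coefficients `∑_{k ≤ n} d_{k+1} p_{n-k}`. Power series agreeing
on `(0, 1)` have the same coefficients (isolated zeros), which is the recurrence.

Since `p₀ = 1` and `d_k > 0`, the recurrence makes every `pₙ` nonnegative and gives
`n pₙ ≤ d⁺ ∑_{j<n} p_j`. For `j ≤ n` we have `e · e^{-j/n} ≥ 1`, so the partial sum is at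
most `e · P(e^{-1/n})`.
-/

open Filter Finset Topology FormalMultilinearSeries
open scoped NNReal ENNReal

section PowerSeries

variable {a b : ℕ → ℝ}

lemma one_le_radius_ofScalars_of_summable
    (ha : ∀ x : ℝ, 0 ≤ x → x < 1 → Summable (fun n => a n * x ^ n)) :
    1 ≤ (ofScalars ℝ a).radius := by
  refine ENNReal.le_of_forall_nnreal_lt fun r hr =>
    (ofScalars ℝ a).le_radius_of_tendsto (l := 0) ?_
  have hr1 : (r : ℝ) < 1 := by exact_mod_cast hr
  simpa [ofScalars_norm, abs_mul] using (ha r r.2 hr1).tendsto_atTop_zero.norm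

lemma one_le_radius_ofScalars_of_abs_le {C : ℝ} (ha : ∀ n, |a n| ≤ C) :
    1 ≤ (ofScalars ℝ a).radius :=
  one_le_radius_ofScalars_of_summable fun x hx0 hx1 =>
    .of_norm_bounded ((summable_geometric_of_lt_one hx0 hx1).mul_left C) fun n => by
      rw [Real.norm_eq_abs, abs_mul, abs_pow, abs_of_nonneg hx0]
      gcongr
      exact ha n

lemma nnnorm_lt_radius_ofScalars (ha : 1 ≤ (ofScalars ℝ a).radius) {x : ℝ} (hx : |x| < 1) :
    ((‖x‖₊ : ℝ≥0) : ℝ≥0∞) < (ofScalars ℝ a).radius :=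
  lt_of_lt_of_le (by exact_mod_cast hx) ha

lemma summable_norm_mul_pow_of_one_le_radius (ha : 1 ≤ (ofScalars ℝ a).radius) {x : ℝ}
    (hx : |x| < 1) : Summable (fun n => ‖a n * x ^ n‖) := by
  simpa [ofScalars_norm, abs_mul] using
    (ofScalars ℝ a).summable_norm_mul_pow (nnnorm_lt_radius_ofScalars ha hx)

lemma summable_natCast_mul_norm_mul_pow (ha : 1 ≤ (ofScalars ℝ a).radius) {x : ℝ}
    (hx : |x| < 1) : Summable (fun n => n * ‖a n * x ^ n‖) := by
  obtain ⟨c, hc, C, -, hC⟩ :=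
    (ofScalars ℝ a).norm_mul_pow_le_mul_pow_of_lt_radius (nnnorm_lt_radius_ofScalars ha hx)
  refine .of_nonneg_of_le (fun n => by positivity) (fun n => ?_)
    ((summable_pow_mul_geometric_of_norm_lt_one 1 (r := c) ?_).mul_left C)
  · simp only [ofScalars_norm, coe_nnnorm, Real.norm_eq_abs] at hC
    simpa [abs_mul, abs_pow, mul_assoc, mul_left_comm] using
      mul_le_mul_of_nonneg_left (hC n) (Nat.cast_nonneg n)
  · rw [Real.norm_of_nonneg hc.1.le]
    exact hc.2

lemma norm_mul_natCast_mul_pow_sub_one_le {r y : ℝ} (hr : 0 < r) (hy : |y| ≤ r) (n : ℕ) :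
    ‖a n * (n * y ^ (n - 1))‖ ≤ r⁻¹ * (n * ‖a n * r ^ n‖) := by
  rcases n with _ | m
  · simp
  · simp only [Nat.cast_add, Nat.cast_one, Nat.add_sub_cancel, Real.norm_eq_abs, abs_mul,
      abs_pow, abs_of_pos hr, abs_of_nonneg (by positivity : (0 : ℝ) ≤ m + 1)]
    calc |a (m + 1)| * ((m + 1) * |y| ^ m) ≤ |a (m + 1)| * ((m + 1) * r ^ m) := by gcongr
      _ = r⁻¹ * ((m + 1) * (|a (m + 1)| * r ^ (m + 1))) := by field_simp; ring

lemma hasDerivAt_tsum_mul_pow (ha : 1 ≤ (ofScalars ℝ a).radius) {x : ℝ} (hx : |x| < 1) :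
    HasDerivAt (fun y => ∑' n, a n * y ^ n) (∑' n, (n + 1) * a (n + 1) * x ^ n) x := by
  obtain ⟨r, hxr, hr1⟩ := exists_between hx
  have hr0 : 0 < r := (abs_nonneg x).trans_lt hxr
  have hu := (summable_natCast_mul_norm_mul_pow ha (x := r)
    (by rwa [abs_of_pos hr0])).mul_left r⁻¹
  have hbound (n : ℕ) (y : ℝ) (hy : y ∈ Set.Ioo (-r) r) :=
    norm_mul_natCast_mul_pow_sub_one_le (a := a) hr0 (abs_lt.2 hy).le n
  have hxt : x ∈ Set.Ioo (-r) r := abs_lt.1 hxr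
  have hderiv := hasDerivAt_tsum_of_isPreconnected hu isOpen_Ioo isPreconnected_Ioo
    (fun n y _ => (hasDerivAt_pow n y).const_mul (a n)) hbound (by simp [hr0] : (0 : ℝ) ∈ _)
    (summable_norm_mul_pow_of_one_le_radius ha (by simp)).of_norm hxt
  have hshift : ∑' n, a n * (n * x ^ (n - 1)) = ∑' n, (n + 1) * a (n + 1) * x ^ n := by
    rw [(Summable.of_norm_bounded hu fun n => hbound n x hxt).tsum_eq_zero_add]
    simp only [CharP.cast_eq_zero, zero_mul, mul_zero, zero_add, Nat.cast_add, Nat.cast_one,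
      Nat.add_sub_cancel]
    exact tsum_congr fun n => by ring
  rwa [hshift] at hderiv

lemma summable_succ_mul_mul_pow (ha : 1 ≤ (ofScalars ℝ a).radius) {x : ℝ} (hx : |x| < 1) :
    Summable (fun n => (n + 1) * a (n + 1) * x ^ n) := by
  obtain ⟨r, hxr, hr1⟩ := exists_between hx
  have hr0 : 0 < r := (abs_nonneg x).trans_lt hxr
  have hs := Summable.of_norm_bounded
    ((summable_natCast_mul_norm_mul_pow ha (x := r) (by rwa [abs_of_pos hr0])).mul_left r⁻¹)
    (norm_mul_natCast_mul_pow_sub_one_le (a := a) hr0 hxr.le)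
  refine ((summable_nat_add_iff 1).2 hs).congr fun n => ?_
  simp only [Nat.cast_add, Nat.cast_one, Nat.add_sub_cancel]
  ring

lemma eq_zero_of_hasSum_mul_pow_eq_zero
    (ha : ∀ x ∈ Set.Ioo (0 : ℝ) 1, HasSum (fun n => a n * x ^ n) 0) : a = 0 := by
  have hhalf : ((1 / 2 : ℝ≥0) : ℝ≥0∞) ≤ (ofScalars ℝ a).radius :=
    (ofScalars ℝ a).le_radius_of_tendsto (l := 0) <| by
      simpa [ofScalars_norm, abs_mul] using
        (ha (1 / 2) ⟨by norm_num, by norm_num⟩).summable.tendsto_atTop_zero.norm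
  have hps : HasFPowerSeriesAt (ofScalars ℝ a).sum (ofScalars ℝ a) 0 :=
    ((ofScalars ℝ a).hasFPowerSeriesOnBall (lt_of_lt_of_le (by simp) hhalf)).hasFPowerSeriesAt
  rw [← ofScalars_series_eq_zero ℝ]
  by_contra hne
  have hzero : ∀ᶠ z in 𝓝[>] (0 : ℝ), (ofScalars ℝ a).sum z = 0 := by
    filter_upwards [Ioo_mem_nhdsGT (zero_lt_one' ℝ)] with z hz
    simpa [FormalMultilinearSeries.sum, ofScalars_apply_eq, mul_comm] using (ha z hz).tsum_eq
  obtain ⟨z, hz0, hzne⟩ :=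
    (hzero.and (nhdsWithin_mono _ (fun z hz => ne_of_gt hz) (hps.locally_ne_zero hne))).exists
  exact hzne hz0

lemma eq_of_hasSum_mul_pow {f : ℝ → ℝ}
    (ha : ∀ x ∈ Set.Ioo (0 : ℝ) 1, HasSum (fun n => a n * x ^ n) (f x))
    (hb : ∀ x ∈ Set.Ioo (0 : ℝ) 1, HasSum (fun n => b n * x ^ n) (f x)) : a = b :=
  sub_eq_zero.1 <| eq_zero_of_hasSum_mul_pow_eq_zero fun x hx => by
    simpa [sub_mul] using (ha x hx).sub (hb x hx)

lemma hasSum_sum_range_mul_mul_pow {x : ℝ} (ha : Summable (fun n => ‖a n * x ^ n‖))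
    (hb : Summable (fun n => ‖b n * x ^ n‖)) :
    HasSum (fun n => (∑ k ∈ range (n + 1), a k * b (n - k)) * x ^ n)
      ((∑' n, a n * x ^ n) * ∑' n, b n * x ^ n) := by
  refine (hasSum_sum_range_mul_of_summable_norm ha hb).congr_fun fun n => ?_
  rw [sum_mul]
  refine sum_congr rfl fun k hk => ?_
  rw [mul_mul_mul_comm, ← pow_add, Nat.add_sub_cancel' (mem_range_succ_iff.1 hk)]

end PowerSeries

section Recurrence

variable {d p : ℕ → ℝ} {C : ℝ}

lemma tsum_div_natCast_mul_pow (y : ℝ) :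
    ∑' n, d n / n * y ^ n = ∑' k : ℕ, d (k + 1) * y ^ (k + 1) / ((k : ℝ) + 1) := by
  by_cases hs : Summable (fun n => d n / n * y ^ n)
  · rw [hs.tsum_eq_zero_add]
    simp only [CharP.cast_eq_zero, div_zero, zero_mul, zero_add, Nat.cast_add, Nat.cast_one]
    exact tsum_congr fun k => by ring
  · rw [tsum_eq_zero_of_not_summable hs, tsum_eq_zero_of_not_summable]
    refine fun hs' => hs ((summable_nat_add_iff 1).1 (hs'.congr fun k => ?_))
    push_cast
    ring

lemma hasDerivAt_tsum_div_mul_pow (hd : ∀ k, |d (k + 1)| ≤ C) {x : ℝ} (hx : |x| < 1) :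
    HasDerivAt (fun y => ∑' k : ℕ, d (k + 1) * y ^ (k + 1) / ((k : ℝ) + 1))
      (∑' k, d (k + 1) * x ^ k) x := by
  have hC : 0 ≤ C := (abs_nonneg _).trans (hd 0)
  have hrad : 1 ≤ (ofScalars ℝ fun n => d n / n).radius := by
    refine one_le_radius_ofScalars_of_abs_le (C := C) fun n => ?_
    rcases n with _ | k
    · simpa using hC
    · rw [abs_div, Nat.abs_cast]
      exact (div_le_self (abs_nonneg _) (by simp)).trans (hd k)
  have h := hasDerivAt_tsum_mul_pow hrad hx
  simp only [tsum_div_natCast_mul_pow] at h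
  convert h using 2 with k
  push_cast
  field_simp

theorem succ_mul_coeff_eq_sum (hd : ∀ k, |d (k + 1)| ≤ C)
    (hp : ∀ x : ℝ, 0 ≤ x → x < 1 →
      HasSum (fun n => p n * x ^ n)
        (Real.exp (∑' k : ℕ, d (k + 1) * x ^ (k + 1) / ((k : ℝ) + 1))))
    (n : ℕ) : (n + 1) * p (n + 1) = ∑ k ∈ range (n + 1), d (k + 1) * p (n - k) := by
  have hrad : 1 ≤ (ofScalars ℝ p).radius :=
    one_le_radius_ofScalars_of_summable fun x hx0 hx1 => (hp x hx0 hx1).summable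
  refine congrFun (eq_of_hasSum_mul_pow
    (a := fun n => (n + 1) * p (n + 1))
    (b := fun n => ∑ k ∈ range (n + 1), d (k + 1) * p (n - k))
    (f := fun x => Real.exp (∑' k : ℕ, d (k + 1) * x ^ (k + 1) / ((k : ℝ) + 1)) *
      ∑' k, d (k + 1) * x ^ k) (fun x hx => ?_) fun x hx => ?_) n
  · have hx1 : |x| < 1 := by rw [abs_of_pos hx.1]; exact hx.2
    have hP := hasDerivAt_tsum_mul_pow hrad hx1
    have hF := (hasDerivAt_tsum_div_mul_pow hd hx1).exp
    have hPF : (fun y => ∑' n, p n * y ^ n) =ᶠ[𝓝 x]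
        fun y => Real.exp (∑' k : ℕ, d (k + 1) * y ^ (k + 1) / ((k : ℝ) + 1)) :=
      eventually_of_mem (Ioo_mem_nhds hx.1 hx.2) fun y hy => (hp y hy.1.le hy.2).tsum_eq
    rw [← (hP.congr_of_eventuallyEq hPF.symm).unique hF]
    exact (summable_succ_mul_mul_pow hrad hx1).hasSum
  · have hx1 : |x| < 1 := by rw [abs_of_pos hx.1]; exact hx.2
    have h := hasSum_sum_range_mul_mul_pow
      (summable_norm_mul_pow_of_one_le_radius (one_le_radius_ofScalars_of_abs_le hd) hx1)
      (summable_norm_mul_pow_of_one_le_radius hrad hx1)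
    rwa [(hp x hx.1.le hx.2).tsum_eq, mul_comm] at h

lemma coeff_nonneg_of_succ_mul_eq_sum (hp0 : 0 ≤ p 0) (hd : ∀ k, 0 ≤ d (k + 1))
    (hrec : ∀ n : ℕ, (n + 1) * p (n + 1) = ∑ k ∈ range (n + 1), d (k + 1) * p (n - k))
    (n : ℕ) : 0 ≤ p n := by
  induction n using Nat.strong_induction_on with
  | _ n ih =>
    rcases n with _ | m
    · exact hp0
    · have hsum : 0 ≤ ((m : ℝ) + 1) * p (m + 1) := by
        rw [hrec m]
        exact sum_nonneg fun k _ => mul_nonneg (hd k) (ih _ (by omega))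
      exact (mul_nonneg_iff_of_pos_left (by positivity)).1 hsum

lemma natCast_mul_le_mul_sum_range (hp : ∀ n, 0 ≤ p n) (hd : ∀ k, d (k + 1) ≤ C)
    (hrec : ∀ n : ℕ, (n + 1) * p (n + 1) = ∑ k ∈ range (n + 1), d (k + 1) * p (n - k))
    (n : ℕ) : n * p n ≤ C * ∑ j ∈ range n, p j := by
  rcases n with _ | m
  · simp
  · calc ((m + 1 : ℕ) : ℝ) * p (m + 1) = ∑ k ∈ range (m + 1), d (k + 1) * p (m - k) := by
          push_cast
          exact hrec m
      _ ≤ ∑ k ∈ range (m + 1), C * p (m - k) := by gcongr with k; exacts [hp _, hd k]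
      _ = C * ∑ j ∈ range (m + 1), p j := by
          rw [← mul_sum]
          congr 1
          simpa using sum_range_reflect p (m + 1)

lemma sum_range_le_exp_one_mul_tsum (hp : ∀ n, 0 ≤ p n) {n : ℕ} (hn : 0 < n)
    (hs : Summable (fun j => p j * Real.exp (-1 / n) ^ j)) :
    ∑ j ∈ range n, p j ≤ Real.exp 1 * ∑' j, p j * Real.exp (-1 / n) ^ j := by
  have hweight {j : ℕ} (hj : j ∈ range n) : 1 ≤ Real.exp 1 * Real.exp (-1 / n) ^ j := by
    rw [← Real.exp_nat_mul, ← Real.exp_add, Real.one_le_exp_iff]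
    have : (j : ℝ) / n ≤ 1 :=
      div_le_one_of_le₀ (by exact_mod_cast (mem_range.1 hj).le) (by positivity)
    linarith [show (j : ℝ) * (-1 / n) = -(j / n) by ring]
  calc ∑ j ∈ range n, p j ≤ ∑ j ∈ range n, Real.exp 1 * (p j * Real.exp (-1 / n) ^ j) :=
        sum_le_sum fun j hj => by nlinarith [hweight hj, hp j]
    _ ≤ Real.exp 1 * ∑' j, p j * Real.exp (-1 / n) ^ j := by
        rw [← mul_sum]
        gcongr
        exact hs.sum_le_tsum _ fun j _ => mul_nonneg (hp j) (by positivity)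

end Recurrence

lemma sum_range_succ_eq_sum_Icc {M : Type*} [AddCommMonoid M] (f : ℕ → M) (n : ℕ) :
    ∑ k ∈ range n, f (k + 1) = ∑ k ∈ Icc 1 n, f k := by
  rw [range_eq_Ico, sum_Ico_add', zero_add, Ico_add_one_right_eq_Icc]

/-- The Taylor coefficients of `p(z) = exp(∑ d_k z^k / k)` satisfy the
recurrence `n p_n = ∑_{k=1}^n d_k p_{n-k}` and the bound `p_n ≤ d⁺ e p(e^{-1/n}) / n`. -/
theorem stmt_2 (d : ℕ → ℝ) (dm dp : ℝ) (hdm : 0 < dm)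
    (hd : ∀ k : ℕ, 1 ≤ k → dm ≤ d k ∧ d k ≤ dp)
    (p : ℕ → ℝ)
    (hp : ∀ x : ℝ, 0 ≤ x → x < 1 →
      HasSum (fun n => p n * x ^ n)
        (Real.exp (∑' k : ℕ, d (k + 1) * x ^ (k + 1) / ((k : ℝ) + 1)))) :
    (∀ n : ℕ, 1 ≤ n → (n : ℝ) * p n = ∑ k ∈ Finset.Icc 1 n, d k * p (n - k)) ∧
    ∀ n : ℕ, 1 ≤ n →
      p n ≤ dp * Real.exp 1 *
        Real.exp (∑' k : ℕ, d (k + 1) * Real.exp (-1 / (n : ℝ)) ^ (k + 1) / ((k : ℝ) + 1))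
          / (n : ℝ) := by
  have hd_pos (k : ℕ) : 0 < d (k + 1) := hdm.trans_le (hd (k + 1) (by omega)).1
  have hd_le (k : ℕ) : d (k + 1) ≤ dp := (hd (k + 1) (by omega)).2
  have hrec := succ_mul_coeff_eq_sum (fun k => (abs_of_pos (hd_pos k)).trans_le (hd_le k)) hp
  have hp0 : p 0 = 1 := by
    simpa using ((hp 0 le_rfl one_pos).unique (hasSum_single 0 fun n hn => by simp [hn])).symm
  have hp_nonneg :=
    coeff_nonneg_of_succ_mul_eq_sum (hp0 ▸ zero_le_one) (fun k => (hd_pos k).le) hrec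
  refine ⟨fun n hn => ?_, fun n hn => ?_⟩
  · obtain ⟨m, rfl⟩ := Nat.exists_eq_add_of_le' hn
    rw [← sum_range_succ_eq_sum_Icc (fun k => d k * p (m + 1 - k))]
    simpa using hrec m
  · have hn' : (0 : ℝ) < n := by exact_mod_cast hn
    have hx : Real.exp (-1 / n) < 1 :=
      Real.exp_lt_one_iff.2 (div_neg_of_neg_of_pos (by norm_num) hn')
    have hsum := hp _ (Real.exp_pos _).le hx
    rw [le_div_iff₀ hn', mul_comm, mul_assoc, ← hsum.tsum_eq]
    calc (n : ℝ) * p n ≤ dp * ∑ j ∈ range n, p j :=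
          natCast_mul_le_mul_sum_range hp_nonneg hd_le hrec n
      _ ≤ dp * (Real.exp 1 * ∑' j, p j * Real.exp (-1 / n) ^ j) := by
          gcongr
          · exact hdm.le.trans ((hd 1 le_rfl).1.trans (hd 1 le_rfl).2)
          · exact sum_range_le_exp_one_mul_tsum hp_nonneg hn hsum.summable
end

section
/- Let p(z) = exp(Σ_{k≥1} (d_k/k) z^k) with 0 < d⁻ ≤ d_k ≤ d⁺. Then all Taylor coefficients p_n are positive, and there is a constant K = K(d⁻, d⁺) > 0 with p_n ≥ K · p(e^{-1/n})/n for all n ≥ 1. -/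
/-!
Write `G(z) = ∑_{k ≥ 1} d_k z^k / k`. Both `p` and `exp ∘ G` are analytic on `(-1, 1)` and
agree on `[0, 1)`, so they agree near `0`; comparing Taylor coefficients in `p' = G' p` (Leibniz
rule) gives `n p_n = ∑_{k=1}^n d_k p_{n-k}`. Hence `p_n > 0`, and with `S_n = p_0 + ⋯ + p_{n-1}`
we get `d⁻ S_n ≤ n p_n ≤ d⁺ S_n`.

The upper bound and Bernoulli's inequality give `S_{m+1} / S_m ≤ 1 + D/m ≤ ((m+1)/m)^D` for
`D = ⌊d⁺⌋ + 1`, so `p_m ≤ d⁺ S_m / m ≤ d⁺ S_n m^{D-1} / n^D` for `m ≥ n`. At `x = e^{-1/n}` the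
terms `m < n` of `p(x)` add up to at most `S_n`, and the others to at most
`d⁺ S_n n^{-D} ∑ m^{D-1} x^m ≤ d⁺ (D-1)! S_n (n (1 - x))^{-D} ≤ d⁺ (D-1)! 2^D S_n`.
So `p(e^{-1/n}) ≤ C S_n ≤ (C / d⁻) n p_n` with `C = 1 + d⁺ (D-1)! 2^D`.
-/

open Finset Real Filter Topology FormalMultilinearSeries
open scoped Nat

section RealPowerSeries

variable {a : ℕ → ℝ}

theorem hasFPowerSeriesOnBall_tsum_mul_pow
    (h : ∀ x : ℝ, 0 ≤ x → x < 1 → Summable fun n ↦ a n * x ^ n) :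
    HasFPowerSeriesOnBall (fun x ↦ ∑' n, a n * x ^ n) (ofScalars ℝ a) 0 1 := by
  have hR : 1 ≤ (ofScalars ℝ a).radius := by
    refine ENNReal.le_of_forall_nnreal_lt fun r hr ↦ le_radius_of_summable _ ?_
    have hr1 : (r : ℝ) < 1 := by exact_mod_cast hr
    simpa [ofScalars_norm, abs_mul] using (h r r.2 hr1).abs
  convert ((ofScalars ℝ a).hasFPowerSeriesOnBall (one_pos.trans_le hR)).mono one_pos hR using 1
  ext x
  simp [FormalMultilinearSeries.sum, mul_comm]

theorem iteratedDeriv_tsum_mul_pow_zero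
    (h : ∀ x : ℝ, 0 ≤ x → x < 1 → Summable fun n ↦ a n * x ^ n) (n : ℕ) :
    iteratedDeriv n (fun x ↦ ∑' k, a k * x ^ k) 0 = n ! * a n := by
  have hF := (hasFPowerSeriesOnBall_tsum_mul_pow h).hasFPowerSeriesAt
  rw [← congrFun (ofScalars_series_injective ℝ ℝ
    (hF.analyticAt.hasFPowerSeriesAt.eq_formalMultilinearSeries hF)) n]
  field_simp

end RealPowerSeries

theorem eventuallyEq_nhds_zero_of_eqOn_Ioo {f g : ℝ → ℝ}
    (hf : AnalyticOnNhd ℝ f (Metric.eball 0 1)) (hg : AnalyticOnNhd ℝ g (Metric.eball 0 1))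
    (h : Set.EqOn f g (Set.Ioo 0 1)) : f =ᶠ[𝓝 0] g := by
  refine eventually_of_mem (Metric.eball_mem_nhds 0 one_pos)
    (hf.eqOn_of_preconnected_of_frequently_eq hg (Metric.isConnected_eball one_pos).isPreconnected
      (z₀ := 1 / 2) (by simp [Metric.mem_eball, edist_dist]) ?_)
  refine (Eventually.filter_mono nhdsWithin_le_nhds ?_).frequently
  filter_upwards [Ioo_mem_nhds (by norm_num : (0 : ℝ) < 1 / 2) (by norm_num : (1 / 2 : ℝ) < 1)]
    using h

theorem coeff_succ_of_deriv_eventuallyEq_mul {𝕜 : Type*} [NontriviallyNormedField 𝕜] [CharZero 𝕜]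
    {f g : 𝕜 → 𝕜} {x : 𝕜} {a b : ℕ → 𝕜} {n : ℕ} (hg : ContDiffAt 𝕜 n g x)
    (hf : ContDiffAt 𝕜 n f x) (h : deriv f =ᶠ[𝓝 x] g * f)
    (ha : ∀ k, iteratedDeriv k f x = k ! * a k) (hb : ∀ k, iteratedDeriv k g x = k ! * b k) :
    (n + 1) * a (n + 1) = ∑ i ∈ range (n + 1), b i * a (n - i) := by
  have key := iteratedDeriv_mul (n := n) hg hf
  rw [← h.iteratedDeriv_eq, ← iteratedDeriv_succ'] at key
  simp only [ha, hb] at key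
  have hsum : ∑ i ∈ range (n + 1), (n.choose i : 𝕜) * (i ! * b i) * ((n - i)! * a (n - i))
      = n ! * ∑ i ∈ range (n + 1), b i * a (n - i) := by
    rw [mul_sum]
    refine sum_congr rfl fun i hi ↦ ?_
    rw [← Nat.choose_mul_factorial_mul_factorial (Nat.lt_succ_iff.1 (mem_range.1 hi))]
    push_cast
    ring
  rw [hsum, Nat.factorial_succ] at key
  push_cast at key
  exact mul_left_cancel₀ (Nat.cast_ne_zero.2 n.factorial_ne_zero) (by linear_combination key)

noncomputable def logSeries (d : ℕ → ℝ) (x : ℝ) : ℝ :=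
  ∑' k : ℕ, d (k + 1) * x ^ (k + 1) / ((k : ℝ) + 1)

theorem summable_logSeries {d : ℕ → ℝ} {C : ℝ} (hd : ∀ k, |d (k + 1)| ≤ C) {x : ℝ}
    (hx0 : 0 ≤ x) (hx1 : x < 1) :
    Summable fun k : ℕ ↦ d (k + 1) * x ^ (k + 1) / ((k : ℝ) + 1) := by
  refine Summable.of_norm_bounded ((summable_geometric_of_lt_one hx0 hx1).mul_left (C * x))
    fun k ↦ ?_
  rw [Real.norm_eq_abs, abs_div, abs_mul, abs_pow, abs_of_nonneg hx0,
    abs_of_pos (by positivity : (0 : ℝ) < k + 1), pow_succ]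
  calc |d (k + 1)| * (x ^ k * x) / (k + 1) ≤ |d (k + 1)| * (x ^ k * x) :=
        div_le_self (by positivity) (by linarith [k.cast_nonneg (α := ℝ)])
    _ ≤ C * x * x ^ k := by
        rw [mul_comm (x ^ k), ← mul_assoc]
        exact mul_le_mul_of_nonneg_right (mul_le_mul_of_nonneg_right (hd k) hx0) (by positivity)

/-- The term `k = 0` on the left is `d 0 / 0 * x ^ 0 = 0`, by the convention `a / 0 = 0`. -/
theorem hasSum_logSeries {d : ℕ → ℝ} {x : ℝ}
    (h : Summable fun k : ℕ ↦ d (k + 1) * x ^ (k + 1) / ((k : ℝ) + 1)) :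
    HasSum (fun k : ℕ ↦ d k / k * x ^ k) (logSeries d x) := by
  refine (hasSum_nat_add_iff' 1).1 ?_
  simpa [logSeries, div_mul_eq_mul_div] using h.hasSum

theorem coeff_recurrence {d p : ℕ → ℝ}
    (hd : ∀ x : ℝ, 0 ≤ x → x < 1 → Summable fun k : ℕ ↦ d (k + 1) * x ^ (k + 1) / ((k : ℝ) + 1))
    (hp : ∀ x : ℝ, 0 ≤ x → x < 1 → HasSum (fun n ↦ p n * x ^ n) (exp (logSeries d x)))
    (n : ℕ) : (n + 1) * p (n + 1) = ∑ i ∈ range (n + 1), d (i + 1) * p (n - i) := by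
  set G : ℝ → ℝ := fun x ↦ ∑' k, d k / k * x ^ k
  have hG_sum (x : ℝ) (h0 : 0 ≤ x) (h1 : x < 1) := hasSum_logSeries (hd x h0 h1)
  have hG_summable (x : ℝ) (h0 : 0 ≤ x) (h1 : x < 1) := (hG_sum x h0 h1).summable
  have hp_summable (x : ℝ) (h0 : 0 ≤ x) (h1 : x < 1) := (hp x h0 h1).summable
  have hG : AnalyticOnNhd ℝ G (Metric.eball 0 1) :=
    (hasFPowerSeriesOnBall_tsum_mul_pow hG_summable).analyticOnNhd
  have hpG : (fun x ↦ ∑' k, p k * x ^ k) =ᶠ[𝓝 0] fun x ↦ exp (G x) :=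
    eventuallyEq_nhds_zero_of_eqOn_Ioo
      (hasFPowerSeriesOnBall_tsum_mul_pow hp_summable).analyticOnNhd hG.rexp fun x hx ↦
        (hp x hx.1.le hx.2).tsum_eq.trans (congrArg exp (hG_sum x hx.1.le hx.2).tsum_eq.symm)
  have hderiv : deriv (fun x ↦ exp (G x)) =ᶠ[𝓝 0] deriv G * fun x ↦ exp (G x) := by
    filter_upwards [Metric.eball_mem_nhds 0 one_pos] with y hy
    rw [((hG y hy).differentiableAt.hasDerivAt.exp).deriv]
    simp [mul_comm]
  have hcoeff_p (k : ℕ) : iteratedDeriv k (fun x ↦ exp (G x)) 0 = k ! * p k := by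
    rw [← hpG.iteratedDeriv_eq, iteratedDeriv_tsum_mul_pow_zero hp_summable]
  have hcoeff_d (k : ℕ) : iteratedDeriv k (deriv G) 0 = k ! * d (k + 1) := by
    rw [← iteratedDeriv_succ', iteratedDeriv_tsum_mul_pow_zero hG_summable, Nat.factorial_succ]
    push_cast
    field_simp
  have hG0 := hG 0 (Metric.mem_eball_self one_pos)
  exact coeff_succ_of_deriv_eventuallyEq_mul hG0.deriv.contDiffAt hG0.rexp.contDiffAt hderiv
    hcoeff_p hcoeff_d

theorem coeff_zero_eq_one {d p : ℕ → ℝ}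
    (hp : HasSum (fun n ↦ p n * 0 ^ n) (exp (logSeries d 0))) : p 0 = 1 := by
  simp only [logSeries, pow_succ, mul_zero, zero_div, tsum_zero, exp_zero] at hp
  simpa using (hasSum_single 0 fun b hb ↦ by simp [hb] : HasSum (fun n ↦ p n * 0 ^ n) _).unique hp

section Recurrence

variable {d p : ℕ → ℝ}
  (hrec : ∀ n : ℕ, (n + 1) * p (n + 1) = ∑ i ∈ range (n + 1), d (i + 1) * p (n - i))
include hrec

theorem pos_of_recurrence (h0 : 0 < p 0) (hd : ∀ k, 0 < d (k + 1)) (n : ℕ) : 0 < p n := by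
  induction n using Nat.strong_induction_on with
  | _ n ih =>
    rcases n with _ | n
    · exact h0
    · have hsum : 0 < ∑ i ∈ range (n + 1), d (i + 1) * p (n - i) :=
        sum_pos (fun i _ ↦ mul_pos (hd i) (ih _ (by omega))) nonempty_range_add_one
      rw [← hrec n] at hsum
      exact pos_of_mul_pos_right hsum (by positivity)

theorem mul_sum_le_of_recurrence (hp : ∀ n, 0 ≤ p n) {c : ℝ} (hc : ∀ k, c ≤ d (k + 1))
    (n : ℕ) : c * ∑ j ∈ range n, p j ≤ n * p n := by
  rcases n with _ | n
  · simp
  · rw [← sum_range_reflect, mul_sum, Nat.cast_succ, hrec n]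
    exact sum_le_sum fun i _ ↦ mul_le_mul_of_nonneg_right (hc i) (hp _)

theorem le_mul_sum_of_recurrence (hp : ∀ n, 0 ≤ p n) {c : ℝ} (hc : ∀ k, d (k + 1) ≤ c)
    (n : ℕ) : n * p n ≤ c * ∑ j ∈ range n, p j := by
  rcases n with _ | n
  · simp
  · rw [← sum_range_reflect, mul_sum, Nat.cast_succ, hrec n]
    exact sum_le_sum fun i _ ↦ mul_le_mul_of_nonneg_right (hc i) (hp _)

end Recurrence

theorem inv_mul_one_sub_exp_neg_one_div_le {n : ℝ} (hn : 1 ≤ n) :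
    (n * (1 - exp (-1 / n)))⁻¹ ≤ 2 := by
  have hn0 : 0 < n := one_pos.trans_le hn
  have hexp : exp (-1 / n) ≤ n / (n + 1) := by
    rw [neg_div, exp_neg, ← inv_div (n + 1) n]
    refine inv_anti₀ (div_pos (by positivity) hn0) ?_
    rw [add_div, div_self hn0.ne', add_comm]
    exact add_one_le_exp _
  refine inv_le_of_inv_le₀ two_pos ?_
  calc (2 : ℝ)⁻¹ ≤ n / (n + 1) := by rw [le_div_iff₀ (by positivity)]; linarith
    _ = n * (1 - n / (n + 1)) := by field_simp; ring
    _ ≤ n * (1 - exp (-1 / n)) := by gcongr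

theorem tsum_pow_mul_geometric_le (k : ℕ) {x : ℝ} (h0 : 0 ≤ x) (h1 : x < 1) :
    ∑' m : ℕ, (m : ℝ) ^ k * x ^ m ≤ k ! / (1 - x) ^ (k + 1) := by
  have hx : ‖x‖ < 1 := by rwa [norm_of_nonneg h0]
  have hpow_le (m : ℕ) : (m : ℝ) ^ k ≤ k ! * (m + k).choose k := by
    have := Nat.pow_le_choose (α := ℝ) k (m + k)
    rw [div_le_iff₀ (by positivity)] at this
    calc (m : ℝ) ^ k ≤ ((m + k + 1 - k : ℕ) : ℝ) ^ k := by gcongr; omega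
      _ ≤ k ! * (m + k).choose k := by linarith
  calc ∑' m : ℕ, (m : ℝ) ^ k * x ^ m ≤ ∑' m : ℕ, k ! * ((m + k).choose k * x ^ m) := by
        refine Summable.tsum_le_tsum (fun m ↦ ?_) ?_ ?_
        · rw [← mul_assoc]; gcongr; exact hpow_le m
        · simpa using summable_pow_mul_geometric_of_norm_lt_one k hx
        · exact (summable_choose_mul_geometric_of_norm_lt_one k hx).mul_left _
    _ = k ! / (1 - x) ^ (k + 1) := by
        rw [tsum_mul_left, tsum_choose_mul_geometric_of_norm_lt_one k hx]; ring

theorem pow_mul_add_le_pow_mul {m : ℝ} (hm : 0 < m) (D : ℕ) :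
    m ^ D * (m + D) ≤ (m + 1) ^ D * m := by
  have := one_add_mul_le_pow (a := m⁻¹) (by linarith [inv_pos.2 hm]) D
  calc m ^ D * (m + D) = m ^ (D + 1) * (1 + D * m⁻¹) := by field_simp; ring
    _ ≤ m ^ (D + 1) * (1 + m⁻¹) ^ D := by gcongr
    _ = (m + 1) ^ D * m := by
      rw [pow_succ, mul_right_comm, ← mul_pow, mul_add, mul_inv_cancel₀ hm.ne', mul_one, mul_comm]

section PartialSums

variable {p : ℕ → ℝ} {c : ℝ} (hp : ∀ n, 0 ≤ p n)
  (h : ∀ n : ℕ, n * p n ≤ c * ∑ j ∈ range n, p j)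
include hp h

theorem sum_range_mul_pow_le {D : ℕ} (hcD : c ≤ D) {n m : ℕ} (hn : 0 < n) (hnm : n ≤ m) :
    (∑ j ∈ range m, p j) * n ^ D ≤ (∑ j ∈ range n, p j) * m ^ D := by
  induction m, hnm using Nat.le_induction with
  | base => rfl
  | succ m hnm ih =>
    have hm : (0 : ℝ) < m := by exact_mod_cast hn.trans_le hnm
    have hS : 0 ≤ ∑ j ∈ range m, p j := sum_nonneg fun j _ ↦ hp j
    have hstep : (∑ j ∈ range (m + 1), p j) * m ^ D ≤ (∑ j ∈ range m, p j) * (m + 1) ^ D := by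
      refine le_of_mul_le_mul_right ?_ hm
      calc (∑ j ∈ range (m + 1), p j) * m ^ D * m
          = m ^ D * (m * ∑ j ∈ range m, p j + m * p m) := by rw [sum_range_succ]; ring
        _ ≤ m ^ D * (m * ∑ j ∈ range m, p j + D * ∑ j ∈ range m, p j) := by
          have := (h m).trans (mul_le_mul_of_nonneg_right hcD hS)
          exact mul_le_mul_of_nonneg_left (by linarith) (by positivity)
        _ = (∑ j ∈ range m, p j) * (m ^ D * (m + D)) := by ring
        _ ≤ (∑ j ∈ range m, p j) * ((m + 1) ^ D * m) :=
          mul_le_mul_of_nonneg_left (pow_mul_add_le_pow_mul hm D) hS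
        _ = (∑ j ∈ range m, p j) * (m + 1) ^ D * m := by ring
    refine le_of_mul_le_mul_right ?_ (pow_pos hm D)
    push_cast
    calc (∑ j ∈ range (m + 1), p j) * n ^ D * m ^ D
        = (∑ j ∈ range (m + 1), p j) * m ^ D * n ^ D := by ring
      _ ≤ (∑ j ∈ range m, p j) * (m + 1) ^ D * n ^ D := by gcongr
      _ = (∑ j ∈ range m, p j) * n ^ D * (m + 1) ^ D := by ring
      _ ≤ (∑ j ∈ range n, p j) * m ^ D * (m + 1) ^ D := by gcongr
      _ = (∑ j ∈ range n, p j) * (m + 1) ^ D * m ^ D := by ring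

theorem le_sum_range_div_pow_mul_pow {k : ℕ} (hc : 0 ≤ c) (hck : c ≤ k + 1) {n m : ℕ}
    (hn : 0 < n) (hnm : n ≤ m) : p m ≤ c * (∑ j ∈ range n, p j) / n ^ (k + 1) * m ^ k := by
  have hm : (0 : ℝ) < m := by exact_mod_cast hn.trans_le hnm
  have hgrowth := sum_range_mul_pow_le hp h (D := k + 1) (by exact_mod_cast hck) hn hnm
  rw [div_mul_eq_mul_div, le_div_iff₀ (by positivity)]
  refine le_of_mul_le_mul_left ?_ hm
  calc m * (p m * n ^ (k + 1)) = m * p m * n ^ (k + 1) := by ring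
    _ ≤ c * (∑ j ∈ range m, p j) * n ^ (k + 1) :=
      mul_le_mul_of_nonneg_right (h m) (by positivity)
    _ ≤ c * ((∑ j ∈ range n, p j) * m ^ (k + 1)) := by
      rw [mul_assoc]; exact mul_le_mul_of_nonneg_left (by exact_mod_cast hgrowth) hc
    _ = m * (c * (∑ j ∈ range n, p j) * m ^ k) := by ring

theorem tsum_mul_pow_le_mul_sum_range {k : ℕ} (hc : 0 ≤ c) (hck : c ≤ k + 1) {n : ℕ}
    (hn : 0 < n) {x : ℝ} (hx0 : 0 ≤ x) (hx1 : x < 1) (hs : Summable fun m ↦ p m * x ^ m) :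
    ∑' m, p m * x ^ m ≤ (1 + c * k ! / (n * (1 - x)) ^ (k + 1)) * ∑ j ∈ range n, p j := by
  set S := ∑ j ∈ range n, p j
  have hS : 0 ≤ S := sum_nonneg fun j _ ↦ hp j
  have hhead : ∑ m ∈ range n, p m * x ^ m ≤ S :=
    sum_le_sum fun m _ ↦ mul_le_of_le_one_right (hp m) (pow_le_one₀ hx0 hx1.le)
  have hgeom : Summable fun m : ℕ ↦ (m : ℝ) ^ k * x ^ m := by
    simpa using summable_pow_mul_geometric_of_norm_lt_one k (by rwa [norm_of_nonneg hx0])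
  have htail : ∑' j, p (j + n) * x ^ (j + n) ≤ c * S / n ^ (k + 1) * (k ! / (1 - x) ^ (k + 1)) :=
    calc ∑' j, p (j + n) * x ^ (j + n)
        ≤ ∑' j, c * S / n ^ (k + 1) * (((j + n : ℕ) : ℝ) ^ k * x ^ (j + n)) := by
          refine Summable.tsum_le_tsum (fun j ↦ ?_) ((summable_nat_add_iff n).2 hs)
            (((summable_nat_add_iff n).2 hgeom).mul_left _)
          rw [← mul_assoc]
          gcongr
          exact le_sum_range_div_pow_mul_pow hp h hc hck hn (Nat.le_add_left n j)
      _ = c * S / n ^ (k + 1) * ∑' j, (((j + n : ℕ) : ℝ) ^ k * x ^ (j + n)) := tsum_mul_left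
      _ ≤ c * S / n ^ (k + 1) * (k ! / (1 - x) ^ (k + 1)) := by
          gcongr
          exact (tsum_comp_le_tsum_of_inj hgeom (fun m ↦ by positivity)
            (add_left_injective n)).trans (tsum_pow_mul_geometric_le k hx0 hx1)
  rw [← Summable.sum_add_tsum_nat_add n hs]
  calc ∑ m ∈ range n, p m * x ^ m + ∑' j, p (j + n) * x ^ (j + n)
      ≤ S + c * S / n ^ (k + 1) * (k ! / (1 - x) ^ (k + 1)) := add_le_add hhead htail
    _ = (1 + c * k ! / (n * (1 - x)) ^ (k + 1)) * S := by rw [mul_pow]; field_simp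

theorem tsum_mul_exp_neg_one_div_pow_le {k n : ℕ} (hc : 0 ≤ c) (hck : c ≤ k + 1) (hn : 1 ≤ n)
    (hs : Summable fun m ↦ p m * exp (-1 / (n : ℝ)) ^ m) :
    ∑' m, p m * exp (-1 / (n : ℝ)) ^ m ≤ (1 + c * k ! * 2 ^ (k + 1)) * ∑ j ∈ range n, p j := by
  have hn1 : (1 : ℝ) ≤ n := by exact_mod_cast hn
  have hx1 : exp (-1 / (n : ℝ)) < 1 :=
    exp_lt_one_iff.2 (div_neg_of_neg_of_pos neg_one_lt_zero (one_pos.trans_le hn1))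
  refine (tsum_mul_pow_le_mul_sum_range hp h hc hck hn (exp_pos _).le hx1 hs).trans ?_
  gcongr
  · exact sum_nonneg fun j _ ↦ hp j
  · rw [div_eq_mul_inv, ← inv_pow]
    gcongr
    exact inv_mul_one_sub_exp_neg_one_div_le hn1

end PartialSums

/-- The Taylor coefficients of `p(z) = exp(∑ d_k z^k / k)` with
`0 < d⁻ ≤ d_k ≤ d⁺` are positive, and `p_n ≥ K(d⁻,d⁺) · p(e^{-1/n}) / n` for `n ≥ 1`. -/
theorem stmt_3 (dm dp : ℝ) (hdm : 0 < dm) (hdp : dm ≤ dp) :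
    ∃ K : ℝ, 0 < K ∧
      ∀ (d : ℕ → ℝ), (∀ k : ℕ, 1 ≤ k → dm ≤ d k ∧ d k ≤ dp) →
      ∀ (p : ℕ → ℝ),
        (∀ x : ℝ, 0 ≤ x → x < 1 →
          HasSum (fun n => p n * x ^ n)
            (Real.exp (∑' k : ℕ, d (k + 1) * x ^ (k + 1) / ((k : ℝ) + 1)))) →
        (∀ n : ℕ, 0 < p n) ∧
        ∀ n : ℕ, 1 ≤ n →
          K * Real.exp (∑' k : ℕ,
              d (k + 1) * Real.exp (-1 / (n : ℝ)) ^ (k + 1) / ((k : ℝ) + 1)) / (n : ℝ)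
            ≤ p n := by
  have hdp0 : 0 < dp := hdm.trans_le hdp
  set k := ⌊dp⌋₊
  set C := 1 + dp * k ! * 2 ^ (k + 1)
  have hC : 0 < C := by positivity
  refine ⟨dm / C, div_pos hdm hC, fun d hd p hp ↦ ?_⟩
  have hd_low (i : ℕ) : dm ≤ d (i + 1) := (hd (i + 1) (by omega)).1
  have hd_up (i : ℕ) : d (i + 1) ≤ dp := (hd (i + 1) (by omega)).2
  have hrec := coeff_recurrence (fun x hx0 hx1 ↦ summable_logSeries (C := dp)
    (fun i ↦ by rw [abs_of_pos (hdm.trans_le (hd_low i))]; exact hd_up i) hx0 hx1) hp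
  have hpos := pos_of_recurrence hrec (coeff_zero_eq_one (hp 0 le_rfl one_pos) ▸ one_pos)
    fun i ↦ hdm.trans_le (hd_low i)
  have hp_nonneg (m : ℕ) : 0 ≤ p m := (hpos m).le
  refine ⟨hpos, fun n hn ↦ ?_⟩
  have hn0 : (0 : ℝ) < n := by exact_mod_cast hn
  have hsum := hp (exp (-1 / n)) (exp_pos _).le
    (exp_lt_one_iff.2 (div_neg_of_neg_of_pos neg_one_lt_zero hn0))
  have hup := tsum_mul_exp_neg_one_div_pow_le hp_nonneg
    (le_mul_sum_of_recurrence hrec hp_nonneg hd_up) hdp0.le (Nat.lt_floor_add_one dp).le hn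
    hsum.summable
  have hlow := mul_sum_le_of_recurrence hrec hp_nonneg hd_low n
  rw [← hsum.tsum_eq, div_le_iff₀ hn0]
  calc dm / C * ∑' m, p m * exp (-1 / n) ^ m ≤ dm / C * (C * ∑ j ∈ range n, p j) := by gcongr
    _ = dm * ∑ j ∈ range n, p j := by field_simp [hC.ne']
    _ ≤ p n * n := by linarith
end

section
/- Let p(z) = exp(Σ_{k≥1} (d_k/k) z^k) with 0 < d⁻ ≤ d_k ≤ d⁺. Then for all m ≥ n ≥ 1: (m/n)^{d⁻} e^{-d⁻/n} ≤ p(e^{-1/m})/p(e^{-1/n}) ≤ (m/n)^{d⁺} e^{d⁺/m}. -/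
/-!
Write `F x = ∑ d_k x^k / k`. The weights `x^k / k` sum to `-log (1 - x)`, so comparing `d_k`
termwise with `d⁻` and `d⁺` traps `F y - F x` (for `0 ≤ x ≤ y < 1`) between `d⁻ L` and `d⁺ L`,
where `L = log (1 - x) - log (1 - y)`. For `x = e^{-1/n}`, `y = e^{-1/m}` the elementary bounds
`1/(t+1) ≤ 1 - e^{-1/t} ≤ 1/t` and `log (1 + 1/t) ≤ 1/t` give
`log (m/n) - 1/n ≤ L ≤ log (m/n) + 1/m`; exponentiating yields the claim.
-/

open Real

lemma one_div_add_one_le_one_sub_exp_neg_one_div {a : ℝ} (ha : 0 < a) :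
    1 / (a + 1) ≤ 1 - exp (-1 / a) := by
  calc 1 / (a + 1) = 1 - (1 / a + 1)⁻¹ := by field_simp; ring
    _ ≤ 1 - (exp (1 / a))⁻¹ := by gcongr; exact add_one_le_exp _
    _ = 1 - exp (-1 / a) := by rw [neg_div, exp_neg]

lemma one_sub_exp_neg_one_div_le (a : ℝ) : 1 - exp (-1 / a) ≤ 1 / a := by
  rw [neg_div]; linarith [one_sub_le_exp_neg (1 / a)]

lemma log_add_one_sub_log_le {a : ℝ} (ha : 0 < a) : log (a + 1) - log a ≤ 1 / a := by
  rw [← log_div (by positivity) ha.ne']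
  calc log ((a + 1) / a) ≤ (a + 1) / a - 1 := log_le_sub_one_of_pos (by positivity)
    _ = 1 / a := by field_simp; ring

lemma neg_log_add_one_le_log_one_sub_exp {a : ℝ} (ha : 0 < a) :
    -log (a + 1) ≤ log (1 - exp (-1 / a)) := by
  rw [← log_inv, inv_eq_one_div]
  exact log_le_log (by positivity) (one_div_add_one_le_one_sub_exp_neg_one_div ha)

lemma log_one_sub_exp_le_neg_log {a : ℝ} (ha : 0 < a) : log (1 - exp (-1 / a)) ≤ -log a := by
  rw [← log_inv, inv_eq_one_div]
  have hpos : 0 < 1 - exp (-1 / a) :=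
    (one_div_pos.2 (by linarith)).trans_le (one_div_add_one_le_one_sub_exp_neg_one_div ha)
  exact log_le_log hpos (one_sub_exp_neg_one_div_le a)

lemma log_div_sub_one_div_le_log_one_sub_exp_sub {a b : ℝ} (ha : 0 < a) (hb : 0 < b) :
    log (b / a) - 1 / a ≤ log (1 - exp (-1 / a)) - log (1 - exp (-1 / b)) := by
  rw [log_div hb.ne' ha.ne']
  linarith [log_add_one_sub_log_le ha, neg_log_add_one_le_log_one_sub_exp ha,
    log_one_sub_exp_le_neg_log hb]

lemma log_one_sub_exp_sub_le_log_div_add_one_div {a b : ℝ} (ha : 0 < a) (hb : 0 < b) :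
    log (1 - exp (-1 / a)) - log (1 - exp (-1 / b)) ≤ log (b / a) + 1 / b := by
  rw [log_div hb.ne' ha.ne']
  linarith [log_add_one_sub_log_le hb, neg_log_add_one_le_log_one_sub_exp hb,
    log_one_sub_exp_le_neg_log ha]

lemma hasSum_pow_sub_pow_div {x y : ℝ} (hx : 0 ≤ x) (hxy : x ≤ y) (hy : y < 1) :
    HasSum (fun k : ℕ => (y ^ (k + 1) - x ^ (k + 1)) / (k + 1)) (log (1 - x) - log (1 - y)) := by
  have hxlt : |x| < 1 := by rw [abs_of_nonneg hx]; linarith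
  have hylt : |y| < 1 := by rw [abs_of_nonneg (hx.trans hxy)]; exact hy
  have h := (hasSum_pow_div_log_of_abs_lt_one hylt).sub (hasSum_pow_div_log_of_abs_lt_one hxlt)
  simpa only [sub_div, neg_sub_neg] using h

section WeightedLogSeries

variable {d : ℕ → ℝ} {c x y : ℝ}

lemma pow_sub_pow_div_nonneg (hx : 0 ≤ x) (hxy : x ≤ y) (k : ℕ) :
    0 ≤ (y ^ (k + 1) - x ^ (k + 1)) / (k + 1) :=
  div_nonneg (sub_nonneg.2 (pow_le_pow_left₀ hx hxy _)) (by positivity)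

lemma mul_log_le_tsum_sub (hc : ∀ k, c ≤ d (k + 1)) (hx : 0 ≤ x) (hxy : x ≤ y) (hy : y < 1)
    (hsx : Summable fun k : ℕ => d (k + 1) * x ^ (k + 1) / ((k : ℝ) + 1))
    (hsy : Summable fun k : ℕ => d (k + 1) * y ^ (k + 1) / ((k : ℝ) + 1)) :
    c * (log (1 - x) - log (1 - y)) ≤
      (∑' k : ℕ, d (k + 1) * y ^ (k + 1) / ((k : ℝ) + 1)) -
        ∑' k : ℕ, d (k + 1) * x ^ (k + 1) / ((k : ℝ) + 1) := by
  refine hasSum_le (fun k => ?_) ((hasSum_pow_sub_pow_div hx hxy hy).mul_left c)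
    (hsy.hasSum.sub hsx.hasSum)
  calc c * ((y ^ (k + 1) - x ^ (k + 1)) / (k + 1))
      ≤ d (k + 1) * ((y ^ (k + 1) - x ^ (k + 1)) / (k + 1)) :=
        mul_le_mul_of_nonneg_right (hc k) (pow_sub_pow_div_nonneg hx hxy k)
    _ = _ := by ring

lemma tsum_sub_le_mul_log (hc : ∀ k, d (k + 1) ≤ c) (hx : 0 ≤ x) (hxy : x ≤ y) (hy : y < 1)
    (hsx : Summable fun k : ℕ => d (k + 1) * x ^ (k + 1) / ((k : ℝ) + 1))
    (hsy : Summable fun k : ℕ => d (k + 1) * y ^ (k + 1) / ((k : ℝ) + 1)) :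
    (∑' k : ℕ, d (k + 1) * y ^ (k + 1) / ((k : ℝ) + 1)) -
        ∑' k : ℕ, d (k + 1) * x ^ (k + 1) / ((k : ℝ) + 1) ≤
      c * (log (1 - x) - log (1 - y)) := by
  refine hasSum_le (fun k => ?_) (hsy.hasSum.sub hsx.hasSum)
    ((hasSum_pow_sub_pow_div hx hxy hy).mul_left c)
  calc _ = d (k + 1) * ((y ^ (k + 1) - x ^ (k + 1)) / (k + 1)) := by ring
    _ ≤ c * ((y ^ (k + 1) - x ^ (k + 1)) / (k + 1)) :=
        mul_le_mul_of_nonneg_right (hc k) (pow_sub_pow_div_nonneg hx hxy k)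

end WeightedLogSeries

/-- For `p(x) = exp(∑_{k≥1} d_k x^k / k)` with `0 < d⁻ ≤ d_k ≤ d⁺` and
`m ≥ n ≥ 1`: `(m/n)^{d⁻} e^{-d⁻/n} ≤ p(e^{-1/m})/p(e^{-1/n}) ≤ (m/n)^{d⁺} e^{d⁺/m}`. -/
theorem stmt_4 (d : ℕ → ℝ) (dm dp : ℝ) (hdm : 0 < dm)
    (hd : ∀ k : ℕ, 1 ≤ k → dm ≤ d k ∧ d k ≤ dp)
    (hsum : ∀ x : ℝ, 0 ≤ x → x < 1 →
      Summable (fun k : ℕ => d (k + 1) * x ^ (k + 1) / ((k : ℝ) + 1)))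
    (m n : ℕ) (hn : 1 ≤ n) (hnm : n ≤ m) :
    ((m : ℝ) / n) ^ dm * Real.exp (-dm / n) ≤
        Real.exp (∑' k : ℕ, d (k + 1) * Real.exp (-1 / (m : ℝ)) ^ (k + 1) / ((k : ℝ) + 1)) /
        Real.exp (∑' k : ℕ, d (k + 1) * Real.exp (-1 / (n : ℝ)) ^ (k + 1) / ((k : ℝ) + 1)) ∧
      Real.exp (∑' k : ℕ, d (k + 1) * Real.exp (-1 / (m : ℝ)) ^ (k + 1) / ((k : ℝ) + 1)) /
        Real.exp (∑' k : ℕ, d (k + 1) * Real.exp (-1 / (n : ℝ)) ^ (k + 1) / ((k : ℝ) + 1)) ≤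
      ((m : ℝ) / n) ^ dp * Real.exp (dp / m) := by
  have hn0 : (0 : ℝ) < n := by exact_mod_cast hn
  have hnm' : (n : ℝ) ≤ m := by exact_mod_cast hnm
  have hm0 : (0 : ℝ) < m := hn0.trans_le hnm'
  set x := exp (-1 / (n : ℝ))
  set y := exp (-1 / (m : ℝ))
  have hx : 0 ≤ x := (exp_pos _).le
  have hy : y < 1 := exp_lt_one_iff.2 (by rw [neg_div]; exact neg_neg_of_pos (by positivity))
  have hxy : x ≤ y := exp_le_exp.2 (by rw [neg_div, neg_div]; gcongr)
  have hdk (k : ℕ) := hd (k + 1) (Nat.le_add_left 1 k)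
  have hdp : 0 ≤ dp := hdm.le.trans ((hd 1 le_rfl).1.trans (hd 1 le_rfl).2)
  have hsx := hsum x hx (hxy.trans_lt hy)
  have hsy := hsum y (hx.trans hxy) hy
  rw [← exp_sub, rpow_def_of_pos (by positivity), rpow_def_of_pos (by positivity), ← exp_add,
    ← exp_add, exp_le_exp, exp_le_exp]
  constructor
  · calc log (m / n) * dm + -dm / n = dm * (log (m / n) - 1 / n) := by ring
      _ ≤ dm * (log (1 - x) - log (1 - y)) :=
        mul_le_mul_of_nonneg_left (log_div_sub_one_div_le_log_one_sub_exp_sub hn0 hm0) hdm.le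
      _ ≤ _ := mul_log_le_tsum_sub (fun k => (hdk k).1) hx hxy hy hsx hsy
  · calc _ ≤ dp * (log (1 - x) - log (1 - y)) :=
          tsum_sub_le_mul_log (fun k => (hdk k).2) hx hxy hy hsx hsy
      _ ≤ dp * (log (m / n) + 1 / m) :=
        mul_le_mul_of_nonneg_left (log_one_sub_exp_sub_le_log_div_add_one_div hn0 hm0) hdp
      _ = log (m / n) * dp + dp / m := by ring
end

section
/- Let u(x) = exp(Σ_{k≥1} (u_k/k) x^k) with 0 ≤ u_k ≤ A. Then there is a constant C = C(A) such that for all j ≥ n ≥ 1: ∫_0^{e^{-1/n}} x^{j−1}/u(x) dx ≤ C·e^{-j/n}/(j·u(e^{-1/n})). -/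
/-!
Since `u_k ≤ A`, for `0 ≤ x ≤ r < 1` we have `log u(r) - log u(x) ≤ A log ((1 - x) / (1 - r))`
(compare termwise with `-log (1 - x) = ∑ x^k / k`), so the integrand is at most
`x^(j-1) ((1 - x) / (1 - r))^A / u(r)`. For `r = e^(-1/n)` one has `1 / (1 - r) ≤ n + 1 ≤ 2j` and
`r - x ≤ log (r / x)`, hence `(1 - x) / (1 - r) ≤ 1 + 2j log (r / x)`; polynomial growth
`(1 + y)^A ≤ D e^(y/4)` then bounds `((1 - x) / (1 - r))^A` by `D (r / x)^(j/2)`, and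
`∫₀^r x^(j/2 - 1) dx = 2 r^(j/2) / j` gives `2D r^j / (j u(r))`.
-/

open Real MeasureTheory

/-- `log u(x)` for the paper's `u(x) = exp (∑_{k ≥ 1} u_k x^k / k)`. -/
noncomputable def weightedLogSeries (u : ℕ → ℝ) (x : ℝ) : ℝ :=
  ∑' k : ℕ, u (k + 1) * x ^ (k + 1) / ((k : ℝ) + 1)

lemma hasSum_pow_succ_div_of_nonneg {x : ℝ} (hx0 : 0 ≤ x) (hx1 : x < 1) :
    HasSum (fun k : ℕ => x ^ (k + 1) / ((k : ℝ) + 1)) (-log (1 - x)) :=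
  hasSum_pow_div_log_of_abs_lt_one (by rwa [abs_of_nonneg hx0])

section WeightedLogSeries

variable {u : ℕ → ℝ} {A : ℝ}

lemma norm_weightedLogSeries_term_le (hu : ∀ k, |u (k + 1)| ≤ A) {x r : ℝ} (hxr : |x| ≤ r)
    (k : ℕ) :
    ‖u (k + 1) * x ^ (k + 1) / ((k : ℝ) + 1)‖ ≤ A * (r ^ (k + 1) / ((k : ℝ) + 1)) := by
  rw [norm_div, norm_mul, norm_pow, Real.norm_eq_abs, Real.norm_eq_abs,
    Real.norm_of_nonneg (by positivity), mul_div_assoc]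
  have := (abs_nonneg x).trans hxr
  gcongr
  · exact (abs_nonneg _).trans (hu 0)
  · exact hu k

lemma summable_weightedLogSeries (hu : ∀ k, |u (k + 1)| ≤ A) {x : ℝ} (hx : |x| < 1) :
    Summable fun k : ℕ => u (k + 1) * x ^ (k + 1) / ((k : ℝ) + 1) :=
  .of_norm_bounded ((hasSum_pow_succ_div_of_nonneg (abs_nonneg x) hx).summable.mul_left A)
    (norm_weightedLogSeries_term_le hu le_rfl)

lemma continuousOn_weightedLogSeries (hu : ∀ k, |u (k + 1)| ≤ A) {r : ℝ} (hr0 : 0 ≤ r)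
    (hr1 : r < 1) : ContinuousOn (weightedLogSeries u) (Set.Icc (-r) r) :=
  continuousOn_tsum (fun k => by fun_prop)
    ((hasSum_pow_succ_div_of_nonneg hr0 hr1).summable.mul_left A)
    fun k _ hx => norm_weightedLogSeries_term_le hu (abs_le.mpr hx) k

lemma weightedLogSeries_sub_le (hu : ∀ k, |u (k + 1)| ≤ A) {x r : ℝ} (hx : 0 ≤ x)
    (hxr : x ≤ r) (hr : r < 1) :
    weightedLogSeries u r - weightedLogSeries u x ≤ A * (log (1 - x) - log (1 - r)) := by
  have hsr := summable_weightedLogSeries hu (x := r) (abs_lt.mpr ⟨by linarith, hr⟩)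
  have hsx := summable_weightedLogSeries hu (x := x) (abs_lt.mpr ⟨by linarith, by linarith⟩)
  have hA : HasSum (fun k : ℕ => A * (r ^ (k + 1) / ((k : ℝ) + 1) - x ^ (k + 1) / ((k : ℝ) + 1)))
      (A * (-log (1 - r) - -log (1 - x))) :=
    ((hasSum_pow_succ_div_of_nonneg (hx.trans hxr) hr).sub
      (hasSum_pow_succ_div_of_nonneg hx (hxr.trans_lt hr))).mul_left A
  rw [weightedLogSeries, weightedLogSeries, ← hsr.tsum_sub hsx]
  refine (hasSum_le (fun k => ?_) (hsr.sub hsx).hasSum hA).trans_eq (by ring)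
  have hd : 0 ≤ r ^ (k + 1) / ((k : ℝ) + 1) - x ^ (k + 1) / ((k : ℝ) + 1) := by
    rw [← sub_div]
    have := pow_le_pow_left₀ hx hxr (k + 1)
    exact div_nonneg (by linarith) (by positivity)
  calc u (k + 1) * r ^ (k + 1) / ((k : ℝ) + 1) - u (k + 1) * x ^ (k + 1) / ((k : ℝ) + 1)
      = u (k + 1) * (r ^ (k + 1) / ((k : ℝ) + 1) - x ^ (k + 1) / ((k : ℝ) + 1)) := by ring
    _ ≤ _ := mul_le_mul_of_nonneg_right (le_of_abs_le (hu k)) hd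

lemma exp_neg_weightedLogSeries_le (hu : ∀ k, |u (k + 1)| ≤ A) {x r : ℝ} (hx : 0 ≤ x)
    (hxr : x ≤ r) (hr : r < 1) :
    exp (-weightedLogSeries u x) ≤ exp (-weightedLogSeries u r) * ((1 - x) / (1 - r)) ^ A := by
  rw [rpow_def_of_pos (div_pos (by linarith) (by linarith)),
    log_div (by linarith) (by linarith), ← exp_add]
  have := weightedLogSeries_sub_le hu hx hxr hr
  gcongr
  linarith

end WeightedLogSeries

lemma div_one_sub_le_one_add_log_div {x r : ℝ} (hx : 0 < x) (hxr : x ≤ r) (hr : r < 1) :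
    (1 - x) / (1 - r) ≤ 1 + log (r / x) / (1 - r) := by
  have hr0 : 0 < r := hx.trans_le hxr
  have hlog : 1 - x / r ≤ log (r / x) := by
    simpa using one_sub_inv_le_log_of_pos (div_pos hr0 hx)
  have hxr' : 0 ≤ 1 - x / r := by rw [sub_nonneg, div_le_one hr0]; exact hxr
  have : r - x = r * (1 - x / r) := by field_simp
  rw [div_le_iff₀ (by linarith), add_mul, div_mul_cancel₀ _ (by linarith)]
  nlinarith

lemma inv_one_sub_exp_neg_inv_le {n : ℝ} (hn : 0 < n) : (1 - exp (-1 / n))⁻¹ ≤ n + 1 := by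
  have he : exp (-1 / n) ≤ (1 + 1 / n)⁻¹ := by
    rw [neg_div, exp_neg]
    exact inv_anti₀ (by positivity) (by linarith [add_one_le_exp (1 / n)])
  have : (1 + 1 / n)⁻¹ = 1 - (n + 1)⁻¹ := by field_simp; ring
  have : 0 < (n + 1)⁻¹ := by positivity
  rw [inv_le_comm₀ (by linarith) (by positivity)]
  linarith

lemma exists_one_add_rpow_le_mul_exp {A c : ℝ} (hA : 0 ≤ A) (hc : 0 < c) :
    ∃ D > 0, ∀ y : ℝ, 0 ≤ y → (1 + y) ^ A ≤ D * exp (c * y) := by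
  set δ := c / (A + 1)
  have hδ : 0 < δ := by positivity
  have hAδ : A * δ ≤ c := by
    rw [mul_div_assoc', div_le_iff₀ (by positivity)]; nlinarith
  refine ⟨exp (A * (δ - 1 - log δ)), exp_pos _, fun y hy => ?_⟩
  have hlog : log (1 + y) ≤ δ * (1 + y) - 1 - log δ := by
    have := log_le_sub_one_of_pos (x := δ * (1 + y)) (by positivity)
    rw [log_mul hδ.ne' (by positivity)] at this
    linarith
  rw [rpow_def_of_pos (by positivity), ← exp_add, exp_le_exp]
  nlinarith [mul_le_mul_of_nonneg_left hlog hA, mul_le_mul_of_nonneg_right hAδ hy]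

lemma rpow_div_one_sub_le {A D r x c : ℝ} (hA : 0 ≤ A)
    (hD : ∀ y : ℝ, 0 ≤ y → (1 + y) ^ A ≤ D * exp (4⁻¹ * y)) (hx : 0 < x) (hxr : x ≤ r)
    (hr : r < 1) (hrc : (1 - r)⁻¹ ≤ 2 * c) :
    ((1 - x) / (1 - r)) ^ A ≤ D * (r / x) ^ (c / 2) := by
  have hlog : 0 ≤ log (r / x) := log_nonneg (by rwa [le_div_iff₀ hx, one_mul])
  have hc : 0 ≤ c := by nlinarith [inv_pos.mpr (sub_pos.mpr hr)]
  have hratio : (1 - x) / (1 - r) ≤ 1 + 2 * c * log (r / x) := by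
    calc (1 - x) / (1 - r) ≤ 1 + log (r / x) / (1 - r) :=
          div_one_sub_le_one_add_log_div hx hxr hr
      _ = 1 + log (r / x) * (1 - r)⁻¹ := by rw [div_eq_mul_inv]
      _ ≤ 1 + log (r / x) * (2 * c) := by gcongr
      _ = 1 + 2 * c * log (r / x) := by ring
  calc ((1 - x) / (1 - r)) ^ A ≤ (1 + 2 * c * log (r / x)) ^ A :=
        rpow_le_rpow (div_nonneg (by linarith) (by linarith)) hratio hA
    _ ≤ D * exp (4⁻¹ * (2 * c * log (r / x))) := hD _ (by positivity)
    _ = D * (r / x) ^ (c / 2) := by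
        rw [rpow_def_of_pos (div_pos (hx.trans_le hxr) hx)]
        ring_nf

section Integral

variable {u : ℕ → ℝ} {A D r : ℝ} {j : ℕ}

lemma pow_div_exp_weightedLogSeries_le (hu : ∀ k, |u (k + 1)| ≤ A) (hA : 0 ≤ A)
    (hD : ∀ y : ℝ, 0 ≤ y → (1 + y) ^ A ≤ D * exp (4⁻¹ * y)) (hj : 1 ≤ j) (hr : r < 1)
    (hrj : (1 - r)⁻¹ ≤ 2 * j) {x : ℝ} (hx : 0 < x) (hxr : x ≤ r) :
    x ^ (j - 1) / exp (weightedLogSeries u x) ≤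
      D * exp (-weightedLogSeries u r) * r ^ ((j : ℝ) / 2) * x ^ ((j : ℝ) / 2 - 1) := by
  have hxj : x ^ (j - 1) = x ^ ((j : ℝ) - 1) := by
    rw [← rpow_natCast, Nat.cast_sub hj, Nat.cast_one]
  have hsplit : x ^ ((j : ℝ) / 2 - 1) = x ^ ((j : ℝ) - 1) / x ^ ((j : ℝ) / 2) := by
    rw [← rpow_sub hx]; ring_nf
  calc x ^ (j - 1) / exp (weightedLogSeries u x)
      = x ^ ((j : ℝ) - 1) * exp (-weightedLogSeries u x) := by rw [hxj, exp_neg, div_eq_mul_inv]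
    _ ≤ x ^ ((j : ℝ) - 1) * (exp (-weightedLogSeries u r) * ((1 - x) / (1 - r)) ^ A) := by
        gcongr
        exact exp_neg_weightedLogSeries_le hu hx.le hxr hr
    _ ≤ x ^ ((j : ℝ) - 1) * (exp (-weightedLogSeries u r) * (D * (r / x) ^ ((j : ℝ) / 2))) := by
        gcongr
        exact rpow_div_one_sub_le hA hD hx hxr hr hrj
    _ = D * exp (-weightedLogSeries u r) * r ^ ((j : ℝ) / 2) * x ^ ((j : ℝ) / 2 - 1) := by
        rw [hsplit, div_rpow (hx.le.trans hxr) hx.le]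
        field_simp

lemma integral_pow_div_exp_weightedLogSeries_le (hu : ∀ k, |u (k + 1)| ≤ A) (hA : 0 ≤ A)
    (hD : ∀ y : ℝ, 0 ≤ y → (1 + y) ^ A ≤ D * exp (4⁻¹ * y)) (hj : 1 ≤ j) (hr0 : 0 < r)
    (hr1 : r < 1) (hrj : (1 - r)⁻¹ ≤ 2 * j) :
    ∫ x in (0 : ℝ)..r, x ^ (j - 1) / exp (weightedLogSeries u x) ≤
      2 * D * r ^ j / (j * exp (weightedLogSeries u r)) := by
  have hj0 : (0 : ℝ) < j := by exact_mod_cast hj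
  set M := D * exp (-weightedLogSeries u r) * r ^ ((j : ℝ) / 2) with hM
  have hint :
      IntervalIntegrable (fun x => x ^ (j - 1) / exp (weightedLogSeries u x)) volume 0 r := by
    refine ContinuousOn.intervalIntegrable ?_
    rw [Set.uIcc_of_le hr0.le]
    have hS : ContinuousOn (weightedLogSeries u) (Set.Icc 0 r) :=
      (continuousOn_weightedLogSeries hu hr0.le hr1).mono
        (Set.Icc_subset_Icc (neg_nonpos.mpr hr0.le) le_rfl)
    exact (continuousOn_pow _).div (continuous_exp.comp_continuousOn hS) fun _ _ => (exp_pos _).ne'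
  calc ∫ x in (0 : ℝ)..r, x ^ (j - 1) / exp (weightedLogSeries u x)
      ≤ ∫ x in (0 : ℝ)..r, M * x ^ ((j : ℝ) / 2 - 1) :=
        intervalIntegral.integral_mono_on_of_le_Ioo hr0.le hint
          ((intervalIntegral.intervalIntegrable_rpow' (by linarith)).const_mul M)
          fun x hx => pow_div_exp_weightedLogSeries_le hu hA hD hj hr1 hrj hx.1 hx.2.le
    _ = M * (r ^ ((j : ℝ) / 2) / ((j : ℝ) / 2)) := by
        rw [intervalIntegral.integral_const_mul, integral_rpow (Or.inl (by linarith)),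
          sub_add_cancel, zero_rpow (by positivity), sub_zero]
    _ = 2 * D * r ^ j / (j * exp (weightedLogSeries u r)) := by
        have hrr : r ^ ((j : ℝ) / 2) * r ^ ((j : ℝ) / 2) = r ^ j := by
          rw [← rpow_add hr0, add_halves, rpow_natCast]
        rw [hM, ← hrr, exp_neg]
        field_simp

end Integral

/-- For `u(x) = exp(∑ u_k x^k / k)` with `0 ≤ u_k ≤ A` there is `C = C(A)`
with `∫₀^{e^{-1/n}} x^{j−1}/u(x) dx ≤ C e^{-j/n}/(j u(e^{-1/n}))` for all `j ≥ n ≥ 1`. -/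
theorem stmt_9 (A : ℝ) (hA : 0 ≤ A) :
    ∃ C : ℝ, 0 < C ∧
      ∀ (u : ℕ → ℝ), (∀ k : ℕ, 1 ≤ k → 0 ≤ u k ∧ u k ≤ A) →
        ∀ n j : ℕ, 1 ≤ n → n ≤ j →
          (∫ x in (0 : ℝ)..Real.exp (-1 / (n : ℝ)),
              x ^ (j - 1) / Real.exp (∑' k : ℕ, u (k + 1) * x ^ (k + 1) / ((k : ℝ) + 1)))
            ≤ C * Real.exp (-(j : ℝ) / (n : ℝ)) / ((j : ℝ) *
              Real.exp (∑' k : ℕ,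
                u (k + 1) * Real.exp (-1 / (n : ℝ)) ^ (k + 1) / ((k : ℝ) + 1))) := by
  obtain ⟨D, hD0, hD⟩ := exists_one_add_rpow_le_mul_exp hA (by norm_num : (0 : ℝ) < 4⁻¹)
  refine ⟨2 * D, by positivity, fun u hu n j hn hnj => ?_⟩
  have hu' (k : ℕ) : |u (k + 1)| ≤ A := abs_le.mpr
    ⟨by linarith [(hu (k + 1) k.succ_pos).1], (hu (k + 1) k.succ_pos).2⟩
  have hn0 : (0 : ℝ) < n := by exact_mod_cast hn
  have hr1 : exp (-1 / (n : ℝ)) < 1 :=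
    exp_lt_one_iff.mpr (div_neg_of_neg_of_pos neg_one_lt_zero hn0)
  have hrj : (1 - exp (-1 / (n : ℝ)))⁻¹ ≤ 2 * j := by
    have : (n : ℝ) ≤ j := by exact_mod_cast hnj
    have : (1 : ℝ) ≤ n := by exact_mod_cast hn
    linarith [inv_one_sub_exp_neg_inv_le hn0]
  calc _ ≤ _ :=
        integral_pow_div_exp_weightedLogSeries_le hu' hA hD (hn.trans hnj) (exp_pos _) hr1 hrj
    _ = _ := by rw [← exp_nat_mul, mul_div_assoc', mul_neg_one]; rfl
end
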